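/- The functions 𝒜 and 𝒩 are strictly increasing on the interval [0, σ_max(F)^{−2}). -/

import Mathlib

open MeasureTheory Real Matrix

/-- The largest singular value of `F`: the supremum of `‖F w‖` over unit vectors. -/
noncomputable def sigmaMax {s ℓ : ℕ} (F : Matrix (Fin s) (Fin ℓ) ℝ) : ℝ :=
  sSup {x : ℝ | ∃ w : Fin ℓ → ℝ, (∑ i, (w i)^2) = 1 ∧ x = Real.sqrt (∑ j, (F.mulVec w j)^2)}

/-- `S(q) = (I − qΛ)⁻¹` with `Λ = FᵀF`. -/
noncomputable def Sq {s ℓ : ℕ} (F : Matrix (Fin s) (Fin ℓ) ℝ) (q : ℝ) :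
    Matrix (Fin ℓ) (Fin ℓ) ℝ :=
  (1 - q • (Fᵀ * F))⁻¹

/-- `𝒜(q) = −(1/2)·ln det(ℓ·S(q)/Tr S(q))`. -/
noncomputable def Afun {s ℓ : ℕ} (F : Matrix (Fin s) (Fin ℓ) ℝ) (q : ℝ) : ℝ :=
  -(1 / 2) * Real.log ((((ℓ : ℝ) / (Sq F q).trace) • Sq F q).det)

/-- `𝒩(q) = sqrt(Tr(Λ·S(q))/Tr S(q))`. -/
noncomputable def Nfun {s ℓ : ℕ} (F : Matrix (Fin s) (Fin ℓ) ℝ) (q : ℝ) : ℝ :=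
  Real.sqrt ((Fᵀ * F * Sq F q).trace / (Sq F q).trace)

/-- `𝔄(q,γ) = (1/2)·ln det(I − qΛ) − (ℓ/2)·ln(1 − qγ²)`. -/
noncomputable def AAfun {s ℓ : ℕ} (F : Matrix (Fin s) (Fin ℓ) ℝ) (q γ : ℝ) : ℝ :=
  (1 / 2) * Real.log (1 - q • (Fᵀ * F)).det - ((ℓ : ℝ) / 2) * Real.log (1 - q * γ^2)

/-!
Diagonalize `Λ = FᵀF` with eigenvalues `μᵢ ∈ [0, σ_max(F)²]` and put `xᵢ(q) = (1 - q μᵢ)⁻¹ > 0`.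
Then `𝒩(q)² = ∑ μᵢ xᵢ / ∑ xᵢ` and `exp (-2 𝒜(q)) = ℓ^ℓ ∏ xᵢ / (∑ xᵢ)^ℓ`. For `a < b` the ratio
`rᵢ = xᵢ(b) / xᵢ(a)` is a strictly increasing function of `μᵢ`, and the `μᵢ` are not all equal.
Chebyshev's sum inequality with weights `xᵢ(a)` shows that the `x`-weighted mean of `μ` increases.
For `𝒜`, the weights `xᵢ(a)` (here `a ≥ 0` is needed) and `log rᵢ` are similarly ordered, so
Chebyshev followed by strict Jensen for `log` gives `∏ rᵢ < (∑ xᵢ(b) / ∑ xᵢ(a))^ℓ`.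
-/

section WeightedMeans

open Finset

variable {ι : Type*} [Fintype ι]

lemma two_mul_sub_eq_sum_sum (x μ r : ι → ℝ) :
    2 * ((∑ i, x i) * (∑ i, x i * μ i * r i) - (∑ i, x i * μ i) * ∑ i, x i * r i) =
      ∑ i, ∑ j, x i * x j * ((μ i - μ j) * (r i - r j)) := by
  have h : ∀ i j, x i * x j * ((μ i - μ j) * (r i - r j)) = x i * μ i * r i * x j
      - x i * μ i * (x j * r j) - x i * r i * (x j * μ j) + x i * (x j * μ j * r j) :=
    fun i j => by ring
  simp only [h, sum_add_distrib, sum_sub_distrib, ← mul_sum, ← sum_mul]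
  ring

lemma sum_mul_sum_lt_sum_mul_sum {x μ r : ι → ℝ} (hx : ∀ i, 0 < x i)
    (hμr : ∀ i j, μ i < μ j → r i < r j) (hμ : ∃ i j, μ i ≠ μ j) :
    (∑ i, x i * μ i) * (∑ i, x i * r i) < (∑ i, x i) * ∑ i, x i * μ i * r i := by
  have hterm : ∀ i j, 0 ≤ (μ i - μ j) * (r i - r j) ∧
      (μ i ≠ μ j → 0 < (μ i - μ j) * (r i - r j)) := by
    intro i j
    rcases lt_trichotomy (μ i) (μ j) with h | h | h
    · have := hμr i j h
      exact ⟨by nlinarith, fun _ => by nlinarith⟩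
    · simp [h]
    · have := hμr j i h
      exact ⟨by nlinarith, fun _ => by nlinarith⟩
  obtain ⟨i₀, j₀, hij⟩ := hμ
  have hpos : 0 < ∑ i, ∑ j, x i * x j * ((μ i - μ j) * (r i - r j)) := by
    refine sum_pos' (fun i _ => sum_nonneg fun j _ => ?_) ⟨i₀, mem_univ _, ?_⟩
    · exact mul_nonneg (mul_pos (hx i) (hx j)).le (hterm i j).1
    · refine sum_pos' (fun j _ => ?_) ⟨j₀, mem_univ _, ?_⟩
      · exact mul_nonneg (mul_pos (hx i₀) (hx j)).le (hterm i₀ j).1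
      · exact mul_pos (mul_pos (hx i₀) (hx j₀)) ((hterm i₀ j₀).2 hij)
  linarith [two_mul_sub_eq_sum_sum x μ r]

lemma prod_lt_pow_card_of_monovary {x r : ι → ℝ} (hx : ∀ i, 0 < x i) (hr : ∀ i, 0 < r i)
    (hxr : Monovary x r) (hr_ne : ∃ i j, r i ≠ r j) :
    ∏ i, r i < ((∑ i, x i * r i) / ∑ i, x i) ^ Fintype.card ι := by
  obtain ⟨i₀, j₀, hij⟩ := hr_ne
  have hT : 0 < ∑ i, x i := sum_pos (fun i _ => hx i) ⟨i₀, mem_univ _⟩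
  set M := (∑ i, x i * r i) / ∑ i, x i
  have hM : 0 < M := div_pos (sum_pos (fun i _ => mul_pos (hx i) (hr i)) ⟨i₀, mem_univ _⟩) hT
  have jensen : ∑ i, x i * log (r i) < log M * ∑ i, x i := by
    have h := strictConcaveOn_log_Ioi.lt_map_sum (t := univ) (w := fun i => x i / ∑ j, x j)
      (p := r) (fun i _ => div_pos (hx i) hT) (by rw [← sum_div, div_self hT.ne'])
      (fun i _ => hr i) ⟨i₀, mem_univ _, j₀, mem_univ _, hij⟩
    simp only [smul_eq_mul, div_mul_eq_mul_div, ← sum_div] at h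
    rwa [div_lt_iff₀ hT] at h
  have chebyshev :
      (∑ i, x i) * ∑ i, log (r i) ≤ Fintype.card ι * ∑ i, x i * log (r i) :=
    Monovary.sum_mul_sum_le_card_mul_sum fun i j h =>
      hxr ((log_lt_log_iff (hr i) (hr j)).1 h)
  have hn : (0 : ℝ) < Fintype.card ι := Nat.cast_pos.2 (Fintype.card_pos_iff.2 ⟨i₀⟩)
  have hlog : log (∏ i, r i) < log (M ^ Fintype.card ι) := by
    rw [log_prod fun i _ => (hr i).ne', log_pow]
    refine lt_of_mul_lt_mul_left ?_ hT.le
    calc (∑ i, x i) * ∑ i, log (r i)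
        ≤ Fintype.card ι * ∑ i, x i * log (r i) := chebyshev
      _ < Fintype.card ι * (log M * ∑ i, x i) := mul_lt_mul_of_pos_left jensen hn
      _ = (∑ i, x i) * (Fintype.card ι * log M) := by ring
  exact (log_lt_log_iff (prod_pos fun i _ => hr i) (by positivity)).1 hlog

lemma inv_one_sub_mul_div_inv_one_sub_mul_lt {a b m m' : ℝ} (hab : a < b) (hm : m < m')
    (hbm : 0 < 1 - b * m) (hbm' : 0 < 1 - b * m') :
    (1 - b * m)⁻¹ / (1 - a * m)⁻¹ < (1 - b * m')⁻¹ / (1 - a * m')⁻¹ := by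
  rw [inv_div_inv, inv_div_inv, div_lt_div_iff₀ hbm hbm']
  nlinarith [mul_pos (sub_pos.2 hab) (sub_pos.2 hm)]

lemma sum_inv_one_sub_mul_pos [Nonempty ι] {μ : ι → ℝ} {q : ℝ} (hq : ∀ i, 0 < 1 - q * μ i) :
    0 < ∑ i, (1 - q * μ i)⁻¹ :=
  sum_pos (fun i _ => inv_pos.2 (hq i)) univ_nonempty

variable (μ : ι → ℝ) (hμ : ∃ i j, μ i ≠ μ j)
include hμ

lemma strictMonoOn_sum_mul_inv_div_sum_inv :
    StrictMonoOn (fun q => (∑ i, μ i * (1 - q * μ i)⁻¹) / ∑ i, (1 - q * μ i)⁻¹)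
      {q | ∀ i, 0 < 1 - q * μ i} := by
  intro a ha b hb hab
  have : Nonempty ι := let ⟨i, _⟩ := hμ; ⟨i⟩
  have h := sum_mul_sum_lt_sum_mul_sum (fun i => inv_pos.2 (ha i))
    (fun i j h => inv_one_sub_mul_div_inv_one_sub_mul_lt hab h (hb i) (hb j)) hμ
  simp only [mul_right_comm _ (μ _), mul_div_cancel₀ _ (inv_pos.2 (ha _)).ne'] at h
  rw [div_lt_div_iff₀ (sum_inv_one_sub_mul_pos ha) (sum_inv_one_sub_mul_pos hb)]
  simp only [mul_comm (μ _)] at h ⊢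
  linarith

lemma strictAntiOn_prod_inv_div_sum_inv_pow :
    StrictAntiOn (fun q => (∏ i, (1 - q * μ i)⁻¹) / (∑ i, (1 - q * μ i)⁻¹) ^ Fintype.card ι)
      {q | 0 ≤ q ∧ ∀ i, 0 < 1 - q * μ i} := by
  rintro a ⟨ha₀, ha⟩ b ⟨-, hb⟩ hab
  obtain ⟨i₀, j₀, hij⟩ := hμ
  let r i := (1 - b * μ i)⁻¹ / (1 - a * μ i)⁻¹
  have hr : ∀ i j, μ i < μ j → r i < r j :=
    fun i j h => inv_one_sub_mul_div_inv_one_sub_mul_lt hab h (hb i) (hb j)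
  have hmv : Monovary (fun i => (1 - a * μ i)⁻¹) r := fun i j h => by
    have hμij : μ i ≤ μ j := not_lt.1 fun h' => (hr j i h').not_gt h
    exact inv_anti₀ (ha j) (by nlinarith)
  have hr_ne : r i₀ ≠ r j₀ := by
    rcases hij.lt_or_gt with h | h
    · exact (hr _ _ h).ne
    · exact (hr _ _ h).ne'
  have h := prod_lt_pow_card_of_monovary (fun i => inv_pos.2 (ha i))
    (fun i => div_pos (inv_pos.2 (hb i)) (inv_pos.2 (ha i))) hmv ⟨i₀, j₀, hr_ne⟩
  simp only [mul_div_cancel₀ _ (inv_pos.2 (ha _)).ne', prod_div_distrib, div_pow] at h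
  have : Nonempty ι := ⟨i₀⟩
  have hTa := pow_pos (sum_inv_one_sub_mul_pos ha) (Fintype.card ι)
  rw [div_lt_div_iff₀ (prod_pos fun i _ => inv_pos.2 (ha i)) hTa] at h
  rw [div_lt_div_iff₀ (pow_pos (sum_inv_one_sub_mul_pos hb) _) hTa]
  linarith

end WeightedMeans

namespace Matrix

variable {m n : Type*} [Fintype n]

lemma posSemidef_transpose_mul_self [Fintype m] (A : Matrix m n ℝ) : (Aᵀ * A).PosSemidef := by
  simpa only [conjTranspose_eq_transpose_of_trivial] using posSemidef_conjTranspose_mul_self A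

namespace IsHermitian

variable [DecidableEq n] {𝕜 : Type*} [RCLike 𝕜] {A : Matrix n n 𝕜}

lemma eq_smul_one_of_eigenvalues_eq (hA : A.IsHermitian) {c : ℝ} (h : ∀ i, hA.eigenvalues i = c) :
    A = c • (1 : Matrix n n 𝕜) := by
  rw [← cfc_id' ℝ A, cfc_congr (g := fun _ => c), cfc_const c A, Algebra.algebraMap_eq_smul_one]
  rw [hA.spectrum_real_eq_range_eigenvalues]
  rintro _ ⟨i, rfl⟩
  exact h i

lemma trace_cfc (hA : A.IsHermitian) (f : ℝ → ℝ) :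
    (cfc f A).trace = ∑ i, (f (hA.eigenvalues i) : 𝕜) := by
  rw [hA.cfc_eq, IsHermitian.cfc, Unitary.conjStarAlgAut_apply, trace_mul_cycle,
    Unitary.coe_star_mul_self, one_mul, trace_diagonal]
  rfl

lemma det_cfc (hA : A.IsHermitian) (f : ℝ → ℝ) :
    (cfc f A).det = ∏ i, (f (hA.eigenvalues i) : 𝕜) := by
  rw [hA.cfc_eq, IsHermitian.cfc, Unitary.conjStarAlgAut_apply, det_mul_comm, ← mul_assoc,
    Unitary.coe_star_mul_self, one_mul, det_diagonal]
  rfl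

lemma inv_one_sub_smul_eq_cfc {B : Matrix n n ℝ} (hB : B.IsHermitian) {q : ℝ}
    (hq : ∀ i, 1 - q * hB.eigenvalues i ≠ 0) :
    (1 - q • B)⁻¹ = cfc (fun x => (1 - q * x)⁻¹) B := by
  have hspec : ∀ x ∈ spectrum ℝ B, 1 - q * x ≠ 0 := by
    rw [hB.spectrum_real_eq_range_eigenvalues]
    rintro _ ⟨i, rfl⟩
    exact hq i
  have hsub : cfc (fun x : ℝ => 1 - q * x) B = 1 - q • B := by
    rw [cfc_sub .., cfc_const_mul .., cfc_const_one .., cfc_id' ..]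
  rw [cfc_inv _ _ hspec, hsub, nonsing_inv_eq_ringInverse]

end IsHermitian

end Matrix

section Gram

variable {s ℓ : ℕ} (F : Matrix (Fin s) (Fin ℓ) ℝ) (hF : (Fᵀ * F).IsHermitian)

lemma bddAbove_sigmaMax_set :
    BddAbove {x : ℝ | ∃ w : Fin ℓ → ℝ, (∑ i, (w i)^2) = 1 ∧ x = √(∑ j, (F *ᵥ w) j ^ 2)} := by
  refine ⟨√(∑ j, ∑ k, F j k ^ 2), ?_⟩
  rintro _ ⟨w, hw, rfl⟩
  refine sqrt_le_sqrt (Finset.sum_le_sum fun j _ => ?_)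
  calc (F *ᵥ w) j ^ 2 = (∑ k, F j k * w k) ^ 2 := rfl
    _ ≤ (∑ k, F j k ^ 2) * ∑ k, w k ^ 2 := Finset.sum_mul_sq_le_sq_mul_sq _ _ _
    _ = ∑ k, F j k ^ 2 := by rw [hw, mul_one]

lemma eigenvalue_le_sigmaMax_sq (i : Fin ℓ) : hF.eigenvalues i ≤ sigmaMax F ^ 2 := by
  set v : Fin ℓ → ℝ := ⇑(hF.eigenvectorBasis i)
  have hv : ∑ k, v k ^ 2 = 1 := by
    have h := hF.eigenvectorBasis.orthonormal.1 i
    rw [EuclideanSpace.norm_eq, sqrt_eq_one] at h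
    simpa only [norm_eq_abs, sq_abs] using h
  have hμ : hF.eigenvalues i = ∑ j, (F *ᵥ v) j ^ 2 := by
    rw [hF.eigenvalues_eq i, star_trivial, RCLike.re_to_real, ← mulVec_mulVec,
      dotProduct_mulVec, vecMul_transpose]
    simp only [dotProduct, sq, v]
  have hle : √(hF.eigenvalues i) ≤ sigmaMax F :=
    le_csSup (bddAbove_sigmaMax_set F) ⟨v, hv, by rw [hμ]⟩
  exact (sqrt_le_iff.1 hle).2

lemma one_sub_mul_eigenvalue_pos {q : ℝ} (hq : q ∈ Set.Ico 0 (sigmaMax F ^ 2)⁻¹) (i : Fin ℓ) :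
    0 < 1 - q * hF.eigenvalues i := by
  have hσ : 0 < sigmaMax F ^ 2 := inv_pos.1 (hq.1.trans_lt hq.2)
  have hqσ : q * sigmaMax F ^ 2 < 1 := by
    simpa only [inv_mul_cancel₀ hσ.ne'] using mul_lt_mul_of_pos_right hq.2 hσ
  nlinarith [mul_le_mul_of_nonneg_left (eigenvalue_le_sigmaMax_sq F hF i) hq.1]

lemma exists_eigenvalue_ne (hΛ : ∀ c : ℝ, Fᵀ * F ≠ c • (1 : Matrix (Fin ℓ) (Fin ℓ) ℝ)) :
    ∃ i j, hF.eigenvalues i ≠ hF.eigenvalues j := by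
  by_contra! h
  obtain ⟨c, hc⟩ : ∃ c, ∀ i, hF.eigenvalues i = c := by
    rcases isEmpty_or_nonempty (Fin ℓ) with _ | ⟨⟨i₀⟩⟩
    · exact ⟨0, isEmptyElim⟩
    · exact ⟨_, fun i => h i i₀⟩
  exact hΛ c (hF.eq_smul_one_of_eigenvalues_eq hc)

variable {q : ℝ}

lemma trace_Sq (hq : ∀ i, 1 - q * hF.eigenvalues i ≠ 0) :
    (Sq F q).trace = ∑ i, (1 - q * hF.eigenvalues i)⁻¹ := by
  rw [Sq, hF.inv_one_sub_smul_eq_cfc hq, hF.trace_cfc]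
  rfl

lemma det_Sq (hq : ∀ i, 1 - q * hF.eigenvalues i ≠ 0) :
    (Sq F q).det = ∏ i, (1 - q * hF.eigenvalues i)⁻¹ := by
  rw [Sq, hF.inv_one_sub_smul_eq_cfc hq, hF.det_cfc]
  rfl

lemma trace_mul_Sq (hq : ∀ i, 1 - q * hF.eigenvalues i ≠ 0) :
    (Fᵀ * F * Sq F q).trace = ∑ i, hF.eigenvalues i * (1 - q * hF.eigenvalues i)⁻¹ := by
  have hmul : Fᵀ * F * cfc (fun x => (1 - q * x)⁻¹) (Fᵀ * F) =
      cfc (fun x => x * (1 - q * x)⁻¹) (Fᵀ * F) := by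
    rw [cfc_mul (fun x => x) _ _ (hg := (Fᵀ * F).finite_real_spectrum.continuousOn _), cfc_id' ..]
  rw [Sq, hF.inv_one_sub_smul_eq_cfc hq, hmul, hF.trace_cfc]
  rfl

lemma Afun_eq (hq : ∀ i, 1 - q * hF.eigenvalues i ≠ 0) :
    Afun F q = -(1 / 2) * log (ℓ ^ ℓ *
      ((∏ i, (1 - q * hF.eigenvalues i)⁻¹) / (∑ i, (1 - q * hF.eigenvalues i)⁻¹) ^ ℓ)) := by
  rw [Afun, det_smul, Fintype.card_fin, trace_Sq F hF hq, det_Sq F hF hq]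
  congr 2
  ring

lemma Nfun_eq (hq : ∀ i, 1 - q * hF.eigenvalues i ≠ 0) :
    Nfun F q = √((∑ i, hF.eigenvalues i * (1 - q * hF.eigenvalues i)⁻¹) /
      ∑ i, (1 - q * hF.eigenvalues i)⁻¹) := by
  rw [Nfun, trace_Sq F hF hq, trace_mul_Sq F hF hq]

end Gram

/-- The functions `𝒜` and `𝒩` are strictly increasing on `[0, σ_max(F)^{−2})`. -/
theorem Afun_Nfun_strictMonoOn
    (s ℓ : ℕ) (F : Matrix (Fin s) (Fin ℓ) ℝ)
    (hΛ : ∀ c : ℝ, Fᵀ * F ≠ c • (1 : Matrix (Fin ℓ) (Fin ℓ) ℝ)) :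
    StrictMonoOn (Afun F) (Set.Ico 0 ((sigmaMax F ^ 2)⁻¹)) ∧
      StrictMonoOn (Nfun F) (Set.Ico 0 ((sigmaMax F ^ 2)⁻¹)) := by
  have hpsd := F.posSemidef_transpose_mul_self
  have hF := hpsd.isHermitian
  have hμ := exists_eigenvalue_ne F hF hΛ
  have : Nonempty (Fin ℓ) := let ⟨i, _⟩ := hμ; ⟨i⟩
  have hpos := fun q (hq : q ∈ Set.Ico 0 (sigmaMax F ^ 2)⁻¹) => one_sub_mul_eigenvalue_pos F hF hq
  refine ⟨fun a ha b hb hab => ?_, fun a ha b hb hab => ?_⟩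
  · rw [Afun_eq F hF fun i => (hpos a ha i).ne', Afun_eq F hF fun i => (hpos b hb i).ne']
    have hg := strictAntiOn_prod_inv_div_sum_inv_pow _ hμ ⟨ha.1, hpos a ha⟩ ⟨hb.1, hpos b hb⟩ hab
    rw [Fintype.card_fin] at hg
    have hgb := div_pos (Finset.prod_pos (s := .univ) fun i _ => inv_pos.2 (hpos b hb i))
      (pow_pos (sum_inv_one_sub_mul_pos (hpos b hb)) ℓ)
    have hℓ : (0 : ℝ) < ℓ ^ ℓ := pow_pos (Nat.cast_pos.2 Fin.pos') ℓ
    have := log_lt_log (mul_pos hℓ hgb) (mul_lt_mul_of_pos_left hg hℓ)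
    linarith
  · rw [Nfun_eq F hF fun i => (hpos a ha i).ne', Nfun_eq F hF fun i => (hpos b hb i).ne']
    have hx i := inv_nonneg.2 (hpos a ha i).le
    refine sqrt_lt_sqrt (div_nonneg ?_ (Finset.sum_nonneg fun i _ => hx i))
      (strictMonoOn_sum_mul_inv_div_sum_inv _ hμ (hpos a ha) (hpos b hb) hab)
    exact Finset.sum_nonneg fun i _ => mul_nonneg (hpsd.eigenvalues_nonneg i) (hx i)
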